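/- arXiv:2209.14701 — 2 statements merged into one kernel-verified Lean document; each statement's English description precedes it below -/
import Mathlib

section
/- No universal first-order sentence in the language of ordered groups distinguishes between any two nontrivial linearly ordered abelian groups: if φ is a universal sentence true in some nontrivial ordered abelian group, then φ is true in every nontrivial ordered abelian group. -/
open FirstOrder FirstOrder.Language

/-- The first-order language `{+, -, 0, ≤}` of ordered abelian groups. -/
def oagLang : Language where
  Functions
    | 0 => Unit   -- the constant 0
    | 1 => Unit   -- negation
    | 2 => Unit   -- addition
    | _ + 3 => Empty
  Relations
    | 2 => Unit   -- the order relation ≤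
    | 0 => Empty
    | 1 => Empty
    | _ + 3 => Empty

/-- The natural `oagLang`-structure on an ordered abelian group. -/
def oagStructure (G : Type) [AddCommGroup G] [LE G] : oagLang.Structure G where
  funMap {n} f x :=
    match n, f with
    | 0, _ => 0
    | 1, _ => -(x 0)
    | 2, _ => x 0 + x 1
  RelMap {n} r x :=
    match n, r with
    | 2, _ => x 0 ≤ x 1

/-- A sentence is universal if it is of the form `∀ x₁ ... ∀ x_k, ψ` with `ψ`
quantifier-free. -/
def IsUniversalSentence {L : Language} (φ : L.Sentence) : Prop :=
  ∃ (k : ℕ) (ψ : L.BoundedFormula Empty k), ψ.IsQF ∧ φ = ψ.alls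

/-!
A quantifier-free formula in `k` variables is a boolean combination of conditions `∑ vᵢ xᵢ = 0`
and `∑ vᵢ xᵢ ≤ 0` with `v ∈ ℤᵏ`, so its truth value at a tuple only depends on the signs of
finitely many integer linear forms. Fourier–Motzkin elimination, carried out in the divisible
hull, shows that every sign pattern realized in an ordered abelian group is realized by a
rational tuple; clearing denominators and multiplying by a positive element moves that tuple into
any nontrivial ordered abelian group. So a counterexample to `∀ x, ψ x` in one group yields a
counterexample in any nontrivial one.
-/

attribute [local instance] oagStructure

namespace oagLang

def termCoeffs {k : ℕ} : oagLang.Term (Empty ⊕ Fin k) → Fin k → ℤ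
  | .var (.inl e) => e.elim
  | .var (.inr i) => Pi.single i 1
  | @Term.func _ _ 0 _ _ => 0
  | @Term.func _ _ 1 _ ts => -termCoeffs (ts 0)
  | @Term.func _ _ 2 _ ts => termCoeffs (ts 0) + termCoeffs (ts 1)
  | @Term.func _ _ (_ + 3) f _ => f.elim

section Realize

variable {M : Type} [AddCommGroup M] [LE M] {k : ℕ} (v : Empty → M) (b : Fin k → M)

theorem realize_term :
    ∀ t : oagLang.Term (Empty ⊕ Fin k), t.realize (Sum.elim v b) = ∑ i, termCoeffs t i • b i
  | .var (.inl e) => e.elim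
  | .var (.inr i) => by simp [termCoeffs, Pi.single_apply]
  | @Term.func _ _ 0 _ _ => by
      show (0 : M) = _
      simp [termCoeffs]
  | @Term.func _ _ 1 _ ts => by
      show -(ts 0).realize _ = _
      simp [termCoeffs, realize_term (ts 0), Finset.sum_neg_distrib]
  | @Term.func _ _ 2 _ ts => by
      show (ts 0).realize _ + (ts 1).realize _ = _
      simp [termCoeffs, realize_term (ts 0), realize_term (ts 1), add_smul,
        Finset.sum_add_distrib]
  | @Term.func _ _ (_ + 3) f _ => f.elim

theorem realize_term_sub_realize_term (t₁ t₂ : oagLang.Term (Empty ⊕ Fin k)) :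
    t₁.realize (Sum.elim v b) - t₂.realize (Sum.elim v b) =
      ∑ i, (termCoeffs t₁ - termCoeffs t₂) i • b i := by
  simp [realize_term, sub_smul]

end Realize

def atomicCoeffs : ∀ {n : ℕ}, oagLang.BoundedFormula Empty n → Finset (Fin n → ℤ)
  | _, .falsum => ∅
  | _, .equal t₁ t₂ => {termCoeffs t₁ - termCoeffs t₂}
  | _, @BoundedFormula.rel _ _ _ 2 _ ts => {termCoeffs (ts 0) - termCoeffs (ts 1)}
  | _, @BoundedFormula.rel _ _ _ _ _ _ => ∅
  | _, .imp φ ψ => atomicCoeffs φ ∪ atomicCoeffs ψ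
  | _, .all _ => ∅

theorem realize_iff_of_sign_eq {M N : Type} [AddCommGroup M] [LinearOrder M]
    [IsOrderedAddMonoid M] [AddCommGroup N] [LinearOrder N] [IsOrderedAddMonoid N] {n : ℕ}
    {ψ : oagLang.BoundedFormula Empty n} (hψ : ψ.IsQF) (v : Empty → M) (w : Empty → N)
    {b : Fin n → M} {c : Fin n → N}
    (h : ∀ u ∈ atomicCoeffs ψ, SignType.sign (∑ i, u i • b i) = SignType.sign (∑ i, u i • c i)) :
    ψ.Realize v b ↔ ψ.Realize w c := by
  induction hψ with
  | falsum => simp [BoundedFormula.Realize]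
  | of_isAtomic hatom =>
    cases hatom with
    | equal t₁ t₂ =>
      have hs := h _ (Finset.mem_singleton_self _)
      rw [BoundedFormula.realize_bdEqual, BoundedFormula.realize_bdEqual, ← sub_eq_zero,
        ← sub_eq_zero (a := t₁.realize _), realize_term_sub_realize_term,
        realize_term_sub_realize_term, ← sign_eq_zero_iff, hs, sign_eq_zero_iff]
    | @rel l R ts =>
      match l, R with
      | 2, _ =>
        have hs := h _ (Finset.mem_singleton_self _)
        show (ts 0).realize _ ≤ (ts 1).realize _ ↔ (ts 0).realize _ ≤ (ts 1).realize _
        rw [← sub_nonpos, ← sub_nonpos (a := (ts 0).realize _), realize_term_sub_realize_term,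
          realize_term_sub_realize_term, ← sign_nonpos_iff, hs, sign_nonpos_iff]
  | imp _ _ ih₁ ih₂ =>
    simp only [atomicCoeffs, Finset.mem_union] at h
    exact imp_congr (ih₁ fun u hu => h u (.inl hu)) (ih₂ fun u hu => h u (.inr hu))

end oagLang

section Sign

theorem cmp_zero_eq_cmp_sign {α : Type*} [Zero α] [LinearOrder α] (a : α) :
    cmp a 0 = cmp (SignType.sign a) 0 := by
  rcases lt_trichotomy a 0 with ha | rfl | ha
  · rw [sign_neg ha, (cmp_eq_lt_iff _ _).2 ha]; rfl
  · simp
  · rw [sign_pos ha, (cmp_eq_gt_iff _ _).2 ha]; rfl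

theorem sign_eq_sign_iff_cmp_zero_eq {α β : Type*} [Zero α] [LinearOrder α] [Zero β]
    [LinearOrder β] {a : α} {b : β} :
    SignType.sign a = SignType.sign b ↔ cmp a 0 = cmp b 0 := by
  rw [cmp_zero_eq_cmp_sign a, cmp_zero_eq_cmp_sign b]
  generalize SignType.sign a = s, SignType.sign b = t
  decide +revert

variable {A B : Type*} [AddCommGroup A] [LinearOrder A] [IsOrderedAddMonoid A]
  [AddCommGroup B] [LinearOrder B] [IsOrderedAddMonoid B]

theorem sign_sub_eq_sign_sub_iff {a a' : A} {b b' : B} :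
    SignType.sign (a - a') = SignType.sign (b - b') ↔ cmp a a' = cmp b b' := by
  rw [sign_eq_sign_iff_cmp_zero_eq, cmp_sub_zero, cmp_sub_zero]

theorem sign_smul {R : Type*} [Ring R] [LinearOrder R] [IsOrderedRing R] [Module R A]
    [PosSMulStrictMono R A] (r : R) (a : A) :
    SignType.sign (r • a) = SignType.sign r * SignType.sign a := by
  rcases lt_trichotomy r 0 with hr | rfl | hr <;> rcases lt_trichotomy a 0 with ha | rfl | ha
  all_goals simp [sign_neg, sign_pos, *, smul_neg_of_pos_of_neg, smul_neg_of_neg_of_pos,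
      smul_pos_of_neg_of_neg]

end Sign

theorem sum_smul_eq_neg_smul_sub {K M : Type*} [DivisionRing K] [AddCommGroup M] [Module K M]
    {k : ℕ} (w : Fin (k + 1) → K) (hw : w 0 ≠ 0) (b : Fin (k + 1) → M) :
    ∑ i, w i • b i = -w 0 • (∑ i, (-(w 0)⁻¹ • Fin.tail w) i • Fin.tail b i - b 0) := by
  simp only [Fin.sum_univ_succ, Pi.smul_apply, smul_eq_mul, mul_smul, ← Finset.smul_sum, Fin.tail]
  rw [smul_sub, smul_smul, neg_mul_neg, mul_inv_cancel₀ hw, one_smul, neg_smul, sub_neg_eq_add,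
    add_comm]

theorem exists_sign_sum_smul_eq {K M : Type*} [Field K] [LinearOrder K] [IsStrictOrderedRing K]
    [AddCommGroup M] [LinearOrder M] [IsOrderedAddMonoid M] [Module K M] [PosSMulStrictMono K M] :
    ∀ {k : ℕ} (V : Finset (Fin k → K)) (b : Fin k → M),
      ∃ x : Fin k → K, ∀ w ∈ V, SignType.sign (∑ i, w i • b i) = SignType.sign (∑ i, w i • x i)
  | 0, _, _ => ⟨0, fun _ _ => by simp⟩
  | k + 1, V, b => by
    classical
    -- For `w 0 ≠ 0`, the form `w` vanishes at `y` iff `y 0 = ∑ i, c w i • Fin.tail y i`. The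
    -- induction hypothesis makes these pivots compare alike in `M` and `K`, and extending the
    -- resulting partial isomorphism to `b 0` yields the first coordinate `x₀`.
    let c : (Fin (k + 1) → K) → Fin k → K := fun w => -(w 0)⁻¹ • Fin.tail w
    obtain ⟨x', hx'⟩ := exists_sign_sum_smul_eq
      (V.image Fin.tail ∪ Finset.image₂ (fun u w => c u - c w) V V) (Fin.tail b)
    let f : Order.PartialIso M K :=
      ⟨V.image fun w => (∑ i, c w i • Fin.tail b i, ∑ i, c w i • x' i), by
        simp only [Finset.forall_mem_image]
        intro u hu w hw
        rw [← sign_sub_eq_sign_sub_iff, ← Finset.sum_sub_distrib, ← Finset.sum_sub_distrib]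
        simpa [sub_smul, sub_mul] using
          hx' _ (Finset.mem_union_right _ (Finset.mem_image₂_of_mem hu hw))⟩
    obtain ⟨x₀, hx₀⟩ := f.exists_across (b 0)
    refine ⟨Fin.cons x₀ x', fun w hw => ?_⟩
    by_cases hw0 : w 0 = 0
    · simpa [Fin.sum_univ_succ, hw0, Fin.tail] using
        hx' _ (Finset.mem_union_left _ (Finset.mem_image_of_mem _ hw))
    · rw [sum_smul_eq_neg_smul_sub w hw0, sum_smul_eq_neg_smul_sub w hw0, sign_smul, sign_smul,
        Fin.tail_cons, Fin.cons_zero,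
        sign_sub_eq_sign_sub_iff.2 (hx₀ _ (Finset.mem_image_of_mem _ hw))]

theorem exists_rat_sign_sum_eq {H : Type*} [AddCommGroup H] [LinearOrder H]
    [IsOrderedAddMonoid H] {k : ℕ} (V : Finset (Fin k → ℤ)) (b : Fin k → H) :
    ∃ x : Fin k → ℚ, ∀ v ∈ V,
      SignType.sign (∑ i, v i • b i) = SignType.sign (∑ i, (v i : ℚ) * x i) := by
  let ι := DivisibleHull.coeOrderAddMonoidHom H
  have hι : StrictMono ι := ι.monotone'.strictMono_of_injective DivisibleHull.coe_injective
  obtain ⟨x, hx⟩ := exists_sign_sum_smul_eq (V.image fun v i => (v i : ℚ)) (ι ∘ b)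
  refine ⟨x, fun v hv => ?_⟩
  rw [← hι.sign_comp, map_sum]
  simpa [Int.cast_smul_eq_zsmul] using hx _ (Finset.mem_image_of_mem _ hv)

theorem Rat.exists_pos_nat_mul_eq_intCast {ι : Type*} [Fintype ι] (x : ι → ℚ) :
    ∃ D : ℕ, 0 < D ∧ ∀ i, ∃ z : ℤ, (D : ℚ) * x i = z := by
  refine ⟨∏ i, (x i).den, Finset.prod_pos fun i _ => (x i).pos, fun i => ?_⟩
  obtain ⟨c, hc⟩ := Finset.dvd_prod_of_mem (fun j => (x j).den) (Finset.mem_univ i)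
  exact ⟨c * (x i).num, by push_cast [hc]; rw [← Rat.mul_den_eq_num]; ring⟩

theorem exists_sign_sum_eq_of_rat {G : Type*} [AddCommGroup G] [LinearOrder G]
    [IsOrderedAddMonoid G] [Nontrivial G] {k : ℕ} (x : Fin k → ℚ) :
    ∃ a : Fin k → G, ∀ v : Fin k → ℤ,
      SignType.sign (∑ i, v i • a i) = SignType.sign (∑ i, (v i : ℚ) * x i) := by
  obtain ⟨g, hg⟩ := exists_zero_lt (α := G)
  obtain ⟨D, hD, hz⟩ := Rat.exists_pos_nat_mul_eq_intCast x
  choose z hz using hz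
  refine ⟨fun i => z i • g, fun v => ?_⟩
  have hsum : (D : ℚ) * ∑ i, (v i : ℚ) * x i = ((∑ i, v i * z i : ℤ) : ℚ) := by
    push_cast
    rw [Finset.mul_sum]
    exact Finset.sum_congr rfl fun i _ => by rw [← hz]; ring
  calc SignType.sign (∑ i, v i • z i • g) = SignType.sign ((∑ i, v i * z i) • g) := by
        simp only [Finset.sum_smul, mul_smul]
    _ = SignType.sign ((D : ℚ) * ∑ i, (v i : ℚ) * x i) := by
        rw [sign_smul, sign_pos hg, mul_one, hsum, sign_intCast]
    _ = SignType.sign (∑ i, (v i : ℚ) * x i) := by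
        rw [sign_mul, sign_pos (by positivity), one_mul]

/-- No universal first-order sentence in the language of ordered groups distinguishes
between nontrivial ordered abelian groups: if a universal sentence holds in some
nontrivial ordered abelian group, it holds in every nontrivial ordered abelian group. -/
theorem universal_sentence_oag_transfer (φ : oagLang.Sentence)
    (huniv : IsUniversalSentence φ)
    (hex : ∃ (G : Type) (i : AddCommGroup G) (j : LinearOrder G) (_ : IsOrderedAddMonoid G),
      Nontrivial G ∧ (letI := i; letI := j; letI := oagStructure G; G ⊨ φ)) :
    ∀ (H : Type) [AddCommGroup H] [LinearOrder H] [IsOrderedAddMonoid H] [Nontrivial H],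
      (letI := oagStructure H; H ⊨ φ) := by
  obtain ⟨k, ψ, hψ, rfl⟩ := huniv
  obtain ⟨G, _, _, _, _, hG⟩ := hex
  intro H _ _ _ _
  refine BoundedFormula.realize_alls.mpr fun b => ?_
  obtain ⟨x, hx⟩ := exists_rat_sign_sum_eq (oagLang.atomicCoeffs ψ) b
  obtain ⟨a, ha⟩ := exists_sign_sum_eq_of_rat (G := G) x
  refine (oagLang.realize_iff_of_sign_eq hψ default default fun u hu => ?_).mpr
    (BoundedFormula.realize_alls.mp hG a)
  exact (hx u hu).trans (ha u).symm
end

section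
/- If G and H are divisible ordered abelian groups that are both nontrivial, then G and H are elementarily equivalent in the language {+, -, 0, ≤}. -/
open FirstOrder FirstOrder.Language

/-!
Nontrivial divisible ordered abelian groups eliminate quantifiers by Fourier–Motzkin. Write a
quantifier-free formula as a disjunction of conjunctions of conditions `0 < c • x` or `0 ≤ c • x`
with integer coefficients. In a conjunction, a condition whose coefficient `a` of the last
variable `z` is nonzero says, after dividing by `a`, that `z` lies strictly or weakly above
(`a > 0`) or below (`a < 0`) some element of the group; such a `z` exists iff the conditions not
involving `z` hold and every lower bound is compatible with every upper bound, since the group is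
densely ordered without endpoints. Compatibility of a pair is again a linear condition, obtained by
cancelling `z` in a positive combination of the two. The elimination is syntactic, so each sentence
is equivalent, in every such group, to a Boolean combination of `0 < 0` and `0 ≤ 0`.
-/

namespace DOAG

section Order

variable {α : Type*} [Preorder α] {s t : Bool} {a b c : α}

def LtOrLe (strict : Bool) (a b : α) : Prop := if strict then a < b else a ≤ b

@[simp]
theorem ltOrLe_true : LtOrLe true a b ↔ a < b := Iff.rfl

@[simp]
theorem ltOrLe_false : LtOrLe false a b ↔ a ≤ b := Iff.rfl

theorem ltOrLe_self_iff : LtOrLe s a a ↔ s = false := by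
  cases s <;> simp

theorem LtOrLe.trans (hab : LtOrLe s a b) (hbc : LtOrLe t b c) : LtOrLe (s || t) a c := by
  cases s <;> cases t <;>
    simp only [ltOrLe_true, ltOrLe_false, Bool.or_false, Bool.false_or, Bool.or_self] at hab hbc ⊢
  exacts [hab.trans hbc, hab.trans_lt hbc, hab.trans_le hbc, hab.trans hbc]

theorem isUpperSet_setOf_ltOrLe : IsUpperSet {z | LtOrLe s a z} := fun _ _ hzw hz =>
  by simpa using hz.trans (t := false) hzw

theorem isLowerSet_setOf_ltOrLe : IsLowerSet {z | LtOrLe s z a} := fun _ _ hwz hz =>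
  by simpa using LtOrLe.trans (s := false) hwz hz

theorem exists_ltOrLe_left [NoMinOrder α] (s : Bool) (a : α) : ∃ z, LtOrLe s z a := by
  obtain ⟨z, hz⟩ := exists_lt a
  exact ⟨z, by cases s <;> simp [hz, hz.le]⟩

theorem exists_ltOrLe_right [NoMaxOrder α] (s : Bool) (a : α) : ∃ z, LtOrLe s a z := by
  obtain ⟨z, hz⟩ := exists_gt a
  exact ⟨z, by cases s <;> simp [hz, hz.le]⟩

theorem exists_ltOrLe_ltOrLe [DenselyOrdered α] (h : LtOrLe (s || t) a b) :
    ∃ z, LtOrLe s a z ∧ LtOrLe t z b := by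
  cases s <;> cases t <;>
    simp only [ltOrLe_true, ltOrLe_false, Bool.or_self, Bool.or_true, Bool.true_or] at h ⊢
  · exact ⟨a, le_rfl, h⟩
  · exact ⟨a, le_rfl, h⟩
  · exact ⟨b, h, le_rfl⟩
  · exact exists_between h

end Order

/-- The strongest lower and the strongest upper constraint are compatible, and they imply all
the others because upper (lower) sets of a linear order form a chain. -/
theorem exists_forall_ltOrLe {α : Type*} [LinearOrder α] [Nonempty α] [DenselyOrdered α]
    [NoMinOrder α] [NoMaxOrder α] {ι κ : Type*} [Finite ι] [Finite κ]
    (a : ι → α) (s : ι → Bool) (b : κ → α) (t : κ → Bool)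
    (h : ∀ i j, LtOrLe (s i || t j) (a i) (b j)) :
    ∃ z, (∀ i, LtOrLe (s i) (a i) z) ∧ ∀ j, LtOrLe (t j) z (b j) := by
  let lower (o : Option ι) : UpperSet α :=
    o.elim ⊥ fun i => ⟨_, isUpperSet_setOf_ltOrLe (s := s i) (a := a i)⟩
  let upper (o : Option κ) : LowerSet α :=
    o.elim ⊤ fun j => ⟨_, isLowerSet_setOf_ltOrLe (s := t j) (a := b j)⟩
  obtain ⟨i₀, hi₀⟩ := Finite.exists_max lower
  obtain ⟨j₀, hj₀⟩ := Finite.exists_min upper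
  obtain ⟨z, hz_lower, hz_upper⟩ : ∃ z, z ∈ lower i₀ ∧ z ∈ upper j₀ := by
    rcases i₀ with _ | i <;> rcases j₀ with _ | j
    · simp [lower, upper]
    · simpa [lower, upper] using exists_ltOrLe_left (t j) (b j)
    · simpa [lower, upper] using exists_ltOrLe_right (s i) (a i)
    · simpa [lower, upper] using exists_ltOrLe_ltOrLe (h i j)
  exact ⟨z, fun i => UpperSet.coe_subset_coe.2 (hi₀ (some i)) hz_lower,
    fun j => LowerSet.coe_subset_coe.2 (hj₀ (some j)) hz_upper⟩

def IsDivisible (G : Type*) [AddCommGroup G] : Prop :=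
  ∀ (g : G) (n : ℕ), 0 < n → ∃ x : G, n • x = g

section Group

variable {G : Type*} [AddCommGroup G]

theorem IsDivisible.exists_zsmul_eq (hdiv : IsDivisible G) {m : ℤ} (hm : m ≠ 0) (g : G) :
    ∃ v : G, m • v = g := by
  obtain ⟨v, hv⟩ := hdiv g m.natAbs (Int.natAbs_pos.2 hm)
  refine ⟨m.sign • v, ?_⟩
  rw [smul_smul, mul_comm, Int.sign_mul_self_eq_natAbs, natCast_zsmul, hv]

variable [LinearOrder G] [IsOrderedAddMonoid G] {s : Bool}

theorem IsDivisible.denselyOrdered (hdiv : IsDivisible G) : DenselyOrdered G where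
  dense a b hab := by
    obtain ⟨v, hv⟩ := hdiv.exists_zsmul_eq two_ne_zero (a + b)
    refine ⟨v, ?_, ?_⟩
    · rw [← zsmul_lt_zsmul_iff_right two_pos, hv, two_zsmul]; exact add_lt_add_right hab a
    · rw [← zsmul_lt_zsmul_iff_right two_pos, hv, two_zsmul]; exact add_lt_add_left hab b

theorem ltOrLe_zero_sub_iff {a b : G} : LtOrLe s 0 (b - a) ↔ LtOrLe s a b := by
  cases s <;> simp

theorem ltOrLe_zsmul_iff_of_pos {m : ℤ} (hm : 0 < m) {a b : G} :
    LtOrLe s (m • a) (m • b) ↔ LtOrLe s a b := by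
  cases s <;> simp [zsmul_le_zsmul_iff_right hm, zsmul_lt_zsmul_iff_right hm]

theorem ltOrLe_zsmul_iff_of_neg {m : ℤ} (hm : m < 0) {a b : G} :
    LtOrLe s (m • a) (m • b) ↔ LtOrLe s b a := by
  obtain ⟨k, hk, rfl⟩ : ∃ k, 0 < k ∧ m = -k := ⟨-m, by omega, by omega⟩
  cases s <;> simp [zsmul_le_zsmul_iff_right hk, zsmul_lt_zsmul_iff_right hk]

end Group

theorem linearCombination_snoc {R M : Type*} [Semiring R] [AddCommMonoid M] [Module R M] {n : ℕ}
    (x : Fin n → M) (z : M) (c : Fin (n + 1) → R) :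
    Fintype.linearCombination R (Fin.snoc x z) c =
      c (Fin.last n) • z + Fintype.linearCombination R x (Fin.init c) := by
  simp [Fintype.linearCombination_apply, Fin.sum_univ_castSucc, Fin.init, add_comm]

structure Literal (n : ℕ) where
  coeff : Fin n → ℤ
  strict : Bool

abbrev Clause (n : ℕ) := List (Literal n)

abbrev DNF (n : ℕ) := List (Clause n)

namespace Literal

variable {n : ℕ}

def neg (l : Literal n) : Literal n := ⟨-l.coeff, !l.strict⟩

def lead (l : Literal (n + 1)) : ℤ := l.coeff (Fin.last n)

def init (l : Literal (n + 1)) : Literal n := ⟨Fin.init l.coeff, l.strict⟩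

/-- The positive combination of `l₁` and `l₂` in which the last variable cancels. -/
def cross (l₁ l₂ : Literal (n + 1)) : Literal n :=
  init ⟨(-l₂.lead) • l₁.coeff + l₁.lead • l₂.coeff, l₁.strict || l₂.strict⟩

section Semantics

variable {G : Type*} [AddCommGroup G]

theorem exists_root (hdiv : IsDivisible G) {l : Literal (n + 1)} (hl : l.lead ≠ 0)
    (x : Fin n → G) : ∃ v : G, Fintype.linearCombination ℤ (Fin.snoc x v) l.coeff = 0 := by
  obtain ⟨v, hv⟩ := hdiv.exists_zsmul_eq hl (-Fintype.linearCombination ℤ x (Fin.init l.coeff))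
  exact ⟨v, by rw [linearCombination_snoc, ← lead, hv, neg_add_cancel]⟩

variable [LinearOrder G]

def Holds (l : Literal n) (x : Fin n → G) : Prop :=
  LtOrLe l.strict 0 (Fintype.linearCombination ℤ x l.coeff)

variable {l : Literal (n + 1)} {x : Fin n → G} {v z : G}

theorem holds_snoc_iff_of_lead_eq_zero (hl : l.lead = 0) :
    l.Holds (Fin.snoc x z) ↔ l.init.Holds x := by
  rw [Holds, linearCombination_snoc, ← lead, hl, zero_smul, zero_add]
  rfl

variable [IsOrderedAddMonoid G]

theorem holds_neg (l : Literal n) (x : Fin n → G) : l.neg.Holds x ↔ ¬ l.Holds x := by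
  cases l with
  | mk c s => cases s <;> simp [Holds, neg]

theorem holds_snoc_iff_lead_smul (hv : Fintype.linearCombination ℤ (Fin.snoc x v) l.coeff = 0) :
    l.Holds (Fin.snoc x z) ↔ LtOrLe l.strict (l.lead • v) (l.lead • z) := by
  rw [linearCombination_snoc, ← lead] at hv
  rw [Holds, linearCombination_snoc, ← lead, eq_neg_of_add_eq_zero_right hv, ← sub_eq_add_neg,
    ltOrLe_zero_sub_iff]

theorem holds_snoc_iff_of_lead_pos (hl : 0 < l.lead)
    (hv : Fintype.linearCombination ℤ (Fin.snoc x v) l.coeff = 0) :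
    l.Holds (Fin.snoc x z) ↔ LtOrLe l.strict v z := by
  rw [holds_snoc_iff_lead_smul hv, ltOrLe_zsmul_iff_of_pos hl]

theorem holds_snoc_iff_of_lead_neg (hl : l.lead < 0)
    (hv : Fintype.linearCombination ℤ (Fin.snoc x v) l.coeff = 0) :
    l.Holds (Fin.snoc x z) ↔ LtOrLe l.strict z v := by
  rw [holds_snoc_iff_lead_smul hv, ltOrLe_zsmul_iff_of_neg hl]

theorem holds_cross_iff {l₁ l₂ : Literal (n + 1)} {v₁ v₂ : G} (h₁ : 0 < l₁.lead)
    (h₂ : l₂.lead < 0) (hv₁ : Fintype.linearCombination ℤ (Fin.snoc x v₁) l₁.coeff = 0)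
    (hv₂ : Fintype.linearCombination ℤ (Fin.snoc x v₂) l₂.coeff = 0) :
    (cross l₁ l₂).Holds x ↔ LtOrLe (l₁.strict || l₂.strict) v₁ v₂ := by
  have hlead : lead ⟨(-l₂.lead) • l₁.coeff + l₁.lead • l₂.coeff, l₁.strict || l₂.strict⟩ = 0 := by
    simp only [lead, Pi.add_apply, Pi.smul_apply, smul_eq_mul]; ring
  rw [cross, ← holds_snoc_iff_of_lead_eq_zero (z := v₁) hlead, Holds, map_add, map_zsmul,
    map_zsmul, hv₁, smul_zero, zero_add, ← smul_zero l₁.lead, ltOrLe_zsmul_iff_of_pos h₁]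
  exact holds_snoc_iff_of_lead_neg (l := ⟨l₂.coeff, _⟩) h₂ hv₂

end Semantics

end Literal

namespace Clause

variable {n : ℕ} {G : Type*} [AddCommGroup G] [LinearOrder G]

def Holds (C : Clause n) (x : Fin n → G) : Prop := ∀ l ∈ C, l.Holds x

/-- Fourier–Motzkin elimination of the last variable. -/
def elim (C : Clause (n + 1)) : Clause n :=
  (C.filter (·.lead = 0)).map Literal.init ++
    (C.filter (0 < ·.lead)).flatMap fun l₁ => (C.filter (·.lead < 0)).map l₁.cross

theorem holds_elim_iff [IsOrderedAddMonoid G] [Nontrivial G] (hdiv : IsDivisible G)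
    (C : Clause (n + 1))
    (x : Fin n → G) : C.elim.Holds x ↔ ∃ z, C.Holds (Fin.snoc x z) := by
  have hroot (l : Literal (n + 1)) :
      ∃ v : G, l.lead ≠ 0 → Fintype.linearCombination ℤ (Fin.snoc x v) l.coeff = 0 := by
    by_cases hl : l.lead = 0
    · exact ⟨0, absurd hl⟩
    · exact (Literal.exists_root hdiv hl x).imp fun _ hv _ => hv
  choose v hv using hroot
  simp only [Holds, elim, List.mem_append, List.mem_map, List.mem_flatMap, List.mem_filter,
    decide_eq_true_eq]
  constructor
  · intro h
    have := hdiv.denselyOrdered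
    have : Finite {l // l ∈ C ∧ 0 < l.lead} := (C.finite_toSet.subset fun _ h => h.1).to_subtype
    have : Finite {l // l ∈ C ∧ l.lead < 0} := (C.finite_toSet.subset fun _ h => h.1).to_subtype
    obtain ⟨z, hz_lower, hz_upper⟩ := exists_forall_ltOrLe
      (fun l : {l // l ∈ C ∧ 0 < l.lead} => v l) (fun l => l.1.strict)
      (fun l : {l // l ∈ C ∧ l.lead < 0} => v l) (fun l => l.1.strict) fun l₁ l₂ =>
        (Literal.holds_cross_iff l₁.2.2 l₂.2.2 (hv _ l₁.2.2.ne') (hv _ l₂.2.2.ne)).1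
          (h _ (Or.inr ⟨l₁, l₁.2, l₂, l₂.2, rfl⟩))
    refine ⟨z, fun l hl => ?_⟩
    rcases lt_trichotomy l.lead 0 with hneg | h0 | hpos
    · exact (Literal.holds_snoc_iff_of_lead_neg hneg (hv l hneg.ne)).2 (hz_upper ⟨l, hl, hneg⟩)
    · exact (Literal.holds_snoc_iff_of_lead_eq_zero h0).2 (h _ (Or.inl ⟨l, ⟨hl, h0⟩, rfl⟩))
    · exact (Literal.holds_snoc_iff_of_lead_pos hpos (hv l hpos.ne')).2 (hz_lower ⟨l, hl, hpos⟩)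
  · rintro ⟨z, hz⟩ l (⟨l, ⟨hl, hl0⟩, rfl⟩ | ⟨l₁, ⟨hl₁, h₁⟩, l₂, ⟨hl₂, h₂⟩, rfl⟩)
    · exact (Literal.holds_snoc_iff_of_lead_eq_zero hl0).1 (hz l hl)
    · rw [Literal.holds_cross_iff h₁ h₂ (hv l₁ h₁.ne') (hv l₂ h₂.ne)]
      exact ((Literal.holds_snoc_iff_of_lead_pos h₁ (hv l₁ h₁.ne')).1 (hz l₁ hl₁)).trans
        ((Literal.holds_snoc_iff_of_lead_neg h₂ (hv l₂ h₂.ne)).1 (hz l₂ hl₂))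

end Clause

namespace DNF

variable {n : ℕ} {G : Type*} [AddCommGroup G] [LinearOrder G] {x : Fin n → G}

def Holds (D : DNF n) (x : Fin n → G) : Prop := ∃ C ∈ D, C.Holds x

theorem holds_append {D₁ D₂ : DNF n} : (D₁ ++ D₂).Holds x ↔ D₁.Holds x ∨ D₂.Holds x := by
  simp only [Holds, List.mem_append, or_and_right, exists_or]

def and (D₁ D₂ : DNF n) : DNF n := D₁.flatMap fun C₁ => D₂.map (C₁ ++ ·)

theorem holds_and {D₁ D₂ : DNF n} : (D₁.and D₂).Holds x ↔ D₁.Holds x ∧ D₂.Holds x := by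
  simp only [Holds, and, List.mem_flatMap, List.mem_map, Clause.Holds]
  constructor
  · rintro ⟨_, ⟨C₁, hC₁, C₂, hC₂, rfl⟩, h⟩
    simp only [List.mem_append, or_imp, forall_and] at h
    exact ⟨⟨C₁, hC₁, h.1⟩, ⟨C₂, hC₂, h.2⟩⟩
  · rintro ⟨⟨C₁, hC₁, h₁⟩, ⟨C₂, hC₂, h₂⟩⟩
    exact ⟨C₁ ++ C₂, ⟨C₁, hC₁, C₂, hC₂, rfl⟩,
      fun l hl => (List.mem_append.1 hl).elim (h₁ l) (h₂ l)⟩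

variable [IsOrderedAddMonoid G]

def ofNotClause (C : Clause n) : DNF n := C.map fun l => [l.neg]

theorem holds_ofNotClause {C : Clause n} : (ofNotClause C).Holds x ↔ ¬ C.Holds x := by
  simp [Holds, ofNotClause, Clause.Holds, Literal.holds_neg]

def not : DNF n → DNF n
  | [] => [ [] ]
  | C :: D => (ofNotClause C).and (not D)

theorem holds_not {D : DNF n} : D.not.Holds x ↔ ¬ D.Holds x := by
  induction D with
  | nil => simp [Holds, not, Clause.Holds]
  | cons C D ih =>
    rw [not, holds_and, holds_ofNotClause, ih]
    simp only [Holds, List.mem_cons, exists_eq_or_imp, not_or]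

def elim (D : DNF (n + 1)) : DNF n := D.map Clause.elim

theorem holds_elim_iff [Nontrivial G] (hdiv : IsDivisible G) (D : DNF (n + 1)) :
    D.elim.Holds x ↔ ∃ z, D.Holds (Fin.snoc x z) := by
  simp only [Holds, elim, List.mem_map, exists_exists_and_eq_and, Clause.holds_elim_iff hdiv]
  exact ⟨fun ⟨C, hC, z, hz⟩ => ⟨z, C, hC, hz⟩, fun ⟨z, C, hC, hz⟩ => ⟨C, hC, z, hz⟩⟩

end DNF

section Formula

attribute [local instance] oagStructure

def termCoeffs {n : ℕ} : oagLang.Term (Empty ⊕ Fin n) → Fin n → ℤ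
  | .var (.inl e) => e.elim
  | .var (.inr i) => Pi.single i 1
  | .func (l := 0) _ _ => 0
  | .func (l := 1) _ ts => -termCoeffs (ts 0)
  | .func (l := 2) _ ts => termCoeffs (ts 0) + termCoeffs (ts 1)
  | .func (l := _ + 3) f _ => f.elim

/-- Quantifier elimination for nontrivial divisible ordered abelian groups. -/
def toDNF : ∀ {n}, oagLang.BoundedFormula Empty n → DNF n
  | _, .falsum => []
  | _, .equal t u =>
    [ [⟨termCoeffs u - termCoeffs t, false⟩, ⟨termCoeffs t - termCoeffs u, false⟩] ]
  | _, .rel (l := 2) _ ts => [ [⟨termCoeffs (ts 1) - termCoeffs (ts 0), false⟩] ]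
  | _, .rel (l := 0) r _ => r.elim
  | _, .rel (l := 1) r _ => r.elim
  | _, .rel (l := _ + 3) r _ => r.elim
  | _, .imp φ ψ => (toDNF φ).not ++ toDNF ψ
  | _, .all φ => (toDNF φ).not.elim.not

variable {G : Type} [AddCommGroup G] [LinearOrder G]

theorem realize_termCoeffs {n : ℕ} (v : Empty → G) (x : Fin n → G) :
    ∀ t : oagLang.Term (Empty ⊕ Fin n),
      t.realize (Sum.elim v x) = Fintype.linearCombination ℤ x (termCoeffs t)
  | .var (.inl e) => e.elim
  | .var (.inr i) => by simp [termCoeffs]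
  | .func (l := 0) _ _ => show 0 = _ by simp [termCoeffs]
  | .func (l := 1) _ ts => show -(ts 0).realize _ = _ by
    simp [termCoeffs, realize_termCoeffs v x (ts 0)]
  | .func (l := 2) _ ts => show (ts 0).realize _ + (ts 1).realize _ = _ by
    simp [termCoeffs, realize_termCoeffs v x (ts 0), realize_termCoeffs v x (ts 1)]
  | .func (l := _ + 3) f _ => f.elim

variable [IsOrderedAddMonoid G] [Nontrivial G]

theorem realize_iff_holds_toDNF (hdiv : IsDivisible G) {n : ℕ}
    (φ : oagLang.BoundedFormula Empty n) (v : Empty → G) (x : Fin n → G) :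
    φ.Realize v x ↔ (toDNF φ).Holds x := by
  induction φ with
  | falsum => simp [BoundedFormula.Realize, toDNF, DNF.Holds]
  | equal t u =>
    simp [BoundedFormula.Realize, toDNF, DNF.Holds, Clause.Holds, Literal.Holds,
      realize_termCoeffs, le_antisymm_iff]
  | rel r ts =>
    rename_i l
    match l, r with
    | 2, _ =>
      show (ts 0).realize _ ≤ (ts 1).realize _ ↔ _
      simp [toDNF, DNF.Holds, Clause.Holds, Literal.Holds, realize_termCoeffs]
    | 0, r => exact r.elim
    | 1, r => exact r.elim
    | _ + 3, r => exact r.elim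
  | imp φ ψ ihφ ihψ =>
    rw [BoundedFormula.realize_imp, ihφ, ihψ, toDNF, DNF.holds_append, DNF.holds_not,
      imp_iff_not_or]
  | all φ ih =>
    rw [BoundedFormula.realize_all, toDNF, DNF.holds_not, DNF.holds_elim_iff hdiv]
    simp only [DNF.holds_not, ← ih, not_exists, not_not]

theorem realize_sentence_iff (hdiv : IsDivisible G) (φ : oagLang.Sentence) :
    G ⊨ φ ↔ ∃ C ∈ toDNF φ, ∀ l ∈ C, l.strict = false := by
  rw [Sentence.Realize, Formula.Realize, realize_iff_holds_toDNF hdiv]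
  simp [DNF.Holds, Clause.Holds, Literal.Holds, Fintype.linearCombination_apply,
    ltOrLe_self_iff]

end Formula

end DOAG

/-- Any two nontrivial divisible ordered abelian groups are elementarily equivalent in the
language `{+, -, 0, ≤}`. -/
theorem divisible_oag_elementarilyEquivalent (G H : Type)
    [AddCommGroup G] [LinearOrder G] [IsOrderedAddMonoid G]
    [AddCommGroup H] [LinearOrder H] [IsOrderedAddMonoid H]
    [Nontrivial G] [Nontrivial H]
    (hG : ∀ (g : G) (n : ℕ), 0 < n → ∃ x : G, n • x = g)
    (hH : ∀ (h : H) (n : ℕ), 0 < n → ∃ x : H, n • x = h) :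
    ∀ φ : oagLang.Sentence,
      (letI := oagStructure G; G ⊨ φ) ↔ (letI := oagStructure H; H ⊨ φ) := fun φ =>
  (DOAG.realize_sentence_iff hG φ).trans (DOAG.realize_sentence_iff hH φ).symm
end
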